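/- There exists a constant C > 0 such that for every real κ ≥ 2 and every real δ with 0 < δ < 1/2, there exists a real polynomial q with deg q ≤ C · √κ · ln(κ/δ) such that |q(x) − x^{−1/2}| ≤ δ/√κ for all real x with 1 ≤ x ≤ κ. -/

import Mathlib

open Polynomial Finset

lemma natDegree_T_le : ∀ n : ℕ, (Polynomial.Chebyshev.T ℝ n).natDegree ≤ n
  | 0 => by simp [Polynomial.Chebyshev.T_zero]
  | 1 => by simp [Polynomial.Chebyshev.T_one]
  | (n+2) => by
    have h1 := natDegree_T_le n
    have h2 := natDegree_T_le (n+1)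
    rw [show ((n+1:ℕ) : ℤ) = (n : ℤ) + 1 by push_cast; ring] at h2
    rw [show ((n+2 : ℕ) : ℤ) = (n : ℤ) + 2 by push_cast; ring,
      Polynomial.Chebyshev.T_add_two]
    refine le_trans (Polynomial.natDegree_sub_le _ _) ?_
    simp only [max_le_iff]
    refine ⟨le_trans (Polynomial.natDegree_mul_le) ?_, by omega⟩
    refine le_trans (add_le_add (Polynomial.natDegree_mul_le) le_rfl) ?_
    simp only [Polynomial.natDegree_X, Polynomial.natDegree_ofNat]
    omega

lemma complex_cos_pow (b : ℕ) (z : ℂ) :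
    (Complex.cos z) ^ b = (2^b : ℂ)⁻¹ *
      ∑ j ∈ Finset.range (b+1), (b.choose j : ℂ) * Complex.cos (((2*(j:ℤ) - b : ℤ) : ℂ) * z) := by
  have expand : (Complex.exp (z * Complex.I) + Complex.exp (-z * Complex.I)) ^ b
      = ∑ j ∈ Finset.range (b+1), (b.choose j : ℂ) *
          (Complex.exp ((((2*(j:ℤ) - b : ℤ) : ℂ)) * z * Complex.I)) := by
    rw [add_pow]
    refine Finset.sum_congr rfl (fun j hj => ?_)
    have hjb : j ≤ b := Nat.lt_succ_iff.mp (Finset.mem_range.mp hj)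
    rw [← Complex.exp_nat_mul, ← Complex.exp_nat_mul, ← Complex.exp_add]
    have : (j : ℂ) * (z * Complex.I) + ((b - j : ℕ) : ℂ) * (-z * Complex.I)
        = (((2*(j:ℤ) - b : ℤ) : ℂ)) * z * Complex.I := by
      push_cast [Nat.cast_sub hjb]; ring
    rw [this]; ring
  have expand' : (Complex.exp (z * Complex.I) + Complex.exp (-z * Complex.I)) ^ b
      = ∑ j ∈ Finset.range (b+1), (b.choose j : ℂ) *
          (Complex.exp (-(((2*(j:ℤ) - b : ℤ) : ℂ)) * z * Complex.I)) := by
    rw [add_comm, add_pow]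
    refine Finset.sum_congr rfl (fun j hj => ?_)
    have hjb : j ≤ b := Nat.lt_succ_iff.mp (Finset.mem_range.mp hj)
    rw [← Complex.exp_nat_mul, ← Complex.exp_nat_mul, ← Complex.exp_add]
    have : (j : ℂ) * (-z * Complex.I) + ((b - j : ℕ) : ℂ) * (z * Complex.I)
        = (-((2*(j:ℤ) - b : ℤ) : ℂ)) * z * Complex.I := by
      push_cast [Nat.cast_sub hjb]; ring
    rw [this]; ring
  have hcos : ∀ w : ℂ, Complex.cos w = (Complex.exp (w * Complex.I) + Complex.exp (-w * Complex.I)) / 2 :=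
    fun w => rfl
  rw [hcos z, div_pow]
  have h2 : ((2:ℂ))^b ≠ 0 := pow_ne_zero _ two_ne_zero
  rw [div_eq_iff h2, mul_comm ((2^b : ℂ)⁻¹) _, mul_assoc, inv_mul_cancel₀ h2, mul_one]
  have : ∑ j ∈ Finset.range (b+1), (b.choose j : ℂ) * Complex.cos (((2*(j:ℤ) - b : ℤ) : ℂ) * z)
      = (∑ j ∈ Finset.range (b+1), (b.choose j : ℂ) *
          (Complex.exp ((((2*(j:ℤ) - b : ℤ) : ℂ)) * z * Complex.I))
        + ∑ j ∈ Finset.range (b+1), (b.choose j : ℂ) *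
          (Complex.exp (-(((2*(j:ℤ) - b : ℤ) : ℂ)) * z * Complex.I))) / 2 := by
    rw [← Finset.sum_add_distrib]
    rw [Finset.sum_div]
    refine Finset.sum_congr rfl (fun j hj => ?_)
    rw [hcos]
    ring
  rw [this, ← expand, ← expand']
  ring

lemma cos_pow_eq (b : ℕ) (θ : ℝ) :
    (Real.cos θ) ^ b = (2^b : ℝ)⁻¹ *
      ∑ j ∈ Finset.range (b+1), (b.choose j : ℝ) * Real.cos (((2*(j:ℤ) - b : ℤ) : ℝ) * θ) := by
  have := complex_cos_pow b (θ : ℂ)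
  apply Complex.ofReal_injective
  push_cast
  convert this using 3 with j hj
  norm_cast

lemma chernoff_side (b d : ℕ) (hb : 0 < b) (σ : ℤ) (hσ : σ = 1 ∨ σ = -1) :
    ∑ j ∈ (Finset.range (b+1)).filter (fun j : ℕ => (d:ℤ) < σ * (2*(j:ℤ) - b)), (b.choose j : ℝ)
      ≤ 2^b * Real.exp (-(d:ℝ)^2/(2*b)) := by
  set μ : ℝ := (d:ℝ)/b with hμ
  have hμ0 : 0 ≤ μ := by positivity
  have step1 : ∑ j ∈ (Finset.range (b+1)).filter (fun j : ℕ => (d:ℤ) < σ * (2*(j:ℤ) - b)), (b.choose j : ℝ)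
      ≤ ∑ j ∈ Finset.range (b+1),
          (b.choose j : ℝ) * Real.exp (μ * ((σ : ℝ) * (2*(j:ℝ) - b) - d)) := by
    refine le_trans (Finset.sum_le_sum (fun j hj => ?_)) (Finset.sum_le_sum_of_subset_of_nonneg
      (Finset.filter_subset _ _) (fun j _ _ => by positivity))
    have hjc := (Finset.mem_filter.mp hj).2
    have harg : (0:ℝ) ≤ μ * ((σ : ℝ) * (2*(j:ℝ) - b) - d) := by
      apply mul_nonneg hμ0
      have : ((d:ℤ):ℝ) < ((σ * (2*(j:ℤ) - b) : ℤ) : ℝ) := by exact_mod_cast hjc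
      push_cast at this ⊢
      linarith
    nlinarith [Real.one_le_exp harg, Nat.cast_nonneg (α := ℝ) (b.choose j)]
  have step2 : ∑ j ∈ Finset.range (b+1),
        (b.choose j : ℝ) * Real.exp (μ * ((σ : ℝ) * (2*(j:ℝ) - b) - d))
      = Real.exp (-(μ*d)) * (Real.exp ((σ:ℝ)*μ) + Real.exp (-((σ:ℝ)*μ)))^b := by
    rw [add_pow, Finset.mul_sum]
    refine Finset.sum_congr rfl (fun j hj => ?_)
    have hjb : j ≤ b := Nat.lt_succ_iff.mp (Finset.mem_range.mp hj)
    rw [← Real.exp_nat_mul, ← Real.exp_nat_mul, ← Real.exp_add]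
    have harg : μ * ((σ : ℝ) * (2*(j:ℝ) - b) - d)
        = -(μ*d) + ((j:ℝ) * ((σ:ℝ)*μ) + ((b-j : ℕ):ℝ) * (-((σ:ℝ)*μ))) := by
      push_cast [Nat.cast_sub hjb]
      ring
    rw [harg, Real.exp_add]; ring
  have hcosh : Real.exp ((σ:ℝ)*μ) + Real.exp (-((σ:ℝ)*μ)) = 2 * Real.cosh ((σ:ℝ)*μ) := by
    rw [Real.cosh_eq]; ring
  have step3 : Real.exp (-(μ*d)) * (Real.exp ((σ:ℝ)*μ) + Real.exp (-((σ:ℝ)*μ)))^b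
      ≤ Real.exp (-(μ*d)) * (2 * Real.exp (((σ:ℝ)*μ)^2/2))^b := by
    apply mul_le_mul_of_nonneg_left _ (Real.exp_nonneg _)
    apply pow_le_pow_left₀ (by rw [hcosh]; positivity)
    rw [hcosh]
    have := Real.cosh_le_exp_half_sq ((σ:ℝ)*μ)
    linarith
  have hσsq : (((σ:ℝ))*μ)^2 = μ^2 := by
    have : ((σ:ℝ))^2 = 1 := by rcases hσ with h | h <;> simp [h]
    rw [mul_pow, this, one_mul]
  have step4 : Real.exp (-(μ*d)) * (2 * Real.exp (((σ:ℝ)*μ)^2/2))^b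
      = 2^b * Real.exp (-(μ*d) + b*(μ^2/2)) := by
    rw [mul_pow, ← Real.exp_nat_mul, hσsq, Real.exp_add]
    ring
  have harg : -(μ*d) + (b:ℝ)*(μ^2/2) = -(d:ℝ)^2/(2*b) := by
    have hb' : (b:ℝ) ≠ 0 := Nat.cast_ne_zero.mpr hb.ne'
    have hμb : μ*b = d := by rw [hμ]; field_simp
    field_simp [hμ]
    linear_combination (μ*b - d) * hμb
  calc ∑ j ∈ (Finset.range (b+1)).filter (fun j : ℕ => (d:ℤ) < σ * (2*(j:ℤ) - b)), (b.choose j : ℝ)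
      ≤ Real.exp (-(μ*d)) * (Real.exp ((σ:ℝ)*μ) + Real.exp (-((σ:ℝ)*μ)))^b := step1.trans (le_of_eq step2)
    _ ≤ 2^b * Real.exp (-(μ*d) + b*(μ^2/2)) := le_of_le_of_eq step3 step4
    _ = 2^b * Real.exp (-(d:ℝ)^2/(2*b)) := by rw [harg]

lemma tail_bound (b d : ℕ) (hb : 0 < b) :
    ∑ j ∈ (Finset.range (b+1)).filter (fun j : ℕ => (d:ℤ) < |2*(j:ℤ) - b|), (b.choose j : ℝ)
      ≤ 2^b * (2 * Real.exp (-(d:ℝ)^2/(2*b))) := by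
  have habs : ∀ j : ℕ, ((d:ℤ) < |2*(j:ℤ) - b|) ↔
      ((d:ℤ) < 1 * (2*(j:ℤ) - b) ∨ (d:ℤ) < (-1) * (2*(j:ℤ) - b)) := by
    intro j
    rw [lt_abs]
    constructor
    · rintro (h | h); exacts [Or.inl (by linarith), Or.inr (by linarith)]
    · rintro (h | h); exacts [Or.inl (by linarith), Or.inr (by linarith)]
  rw [Finset.filter_congr (fun j _ => habs j)]
  rw [Finset.filter_or]
  have hsplit := Finset.sum_union_inter (s₁ := (Finset.range (b+1)).filter (fun j : ℕ => (d:ℤ) < 1 * (2*(j:ℤ) - b))) (s₂ := (Finset.range (b+1)).filter (fun j : ℕ => (d:ℤ) < (-1) * (2*(j:ℤ) - b))) (f := fun j => (b.choose j : ℝ))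
  have hinter : (0:ℝ) ≤ ∑ j ∈ ((Finset.range (b+1)).filter (fun j : ℕ => (d:ℤ) < 1 * (2*(j:ℤ) - b)) ∩ (Finset.range (b+1)).filter (fun j : ℕ => (d:ℤ) < (-1) * (2*(j:ℤ) - b))), (b.choose j : ℝ) := Finset.sum_nonneg (fun j _ => by positivity)
  have h1 := chernoff_side b d hb 1 (Or.inl rfl)
  have h2 := chernoff_side b d hb (-1) (Or.inr rfl)
  push_cast at h1 h2 hsplit hinter ⊢
  linarith

lemma mono_approx (b d : ℕ) (hb : 0 < b) :
    ∃ p : Polynomial ℝ, p.natDegree ≤ d ∧ ∀ s : ℝ, |s| ≤ 1 →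
      |p.eval s - s ^ b| ≤ 2 * Real.exp (-(d:ℝ)^2 / (2*b)) := by
  classical
  set F := (Finset.range (b+1)).filter (fun j : ℕ => ¬ ((d:ℤ) < |2*(j:ℤ) - b|)) with hF
  refine ⟨Polynomial.C ((2^b : ℝ)⁻¹) * ∑ j ∈ F,
    Polynomial.C (b.choose j : ℝ) * Polynomial.Chebyshev.T ℝ (2*(j:ℤ) - b), ?_, ?_⟩
  · refine le_trans Polynomial.natDegree_mul_le ?_
    rw [Polynomial.natDegree_C, zero_add]
    refine Polynomial.natDegree_sum_le_of_forall_le _ _ (fun j hj => ?_)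
    refine le_trans Polynomial.natDegree_mul_le ?_
    rw [Polynomial.natDegree_C, zero_add]
    rw [← Polynomial.Chebyshev.T_natAbs]
    refine le_trans (natDegree_T_le _) ?_
    have := (Finset.mem_filter.mp hj).2
    simp only [Int.abs_eq_natAbs, not_lt] at this
    omega
  · intro s hs
    set θ := Real.arccos s with hθ
    have hsθ : Real.cos θ = s := Real.cos_arccos (by linarith [abs_le.mp hs]) (by linarith [abs_le.mp hs])
    have heval : Polynomial.eval s (Polynomial.C ((2^b : ℝ)⁻¹) * ∑ j ∈ F,
        Polynomial.C (b.choose j : ℝ) * Polynomial.Chebyshev.T ℝ (2*(j:ℤ) - b))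
        = (2^b : ℝ)⁻¹ * ∑ j ∈ F, (b.choose j : ℝ) * Real.cos (((2*(j:ℤ) - b : ℤ) : ℝ) * θ) := by
      rw [Polynomial.eval_mul, Polynomial.eval_C, Polynomial.eval_finset_sum]
      congr 1
      refine Finset.sum_congr rfl (fun j hj => ?_)
      rw [Polynomial.eval_mul, Polynomial.eval_C, ← hsθ, Polynomial.Chebyshev.T_real_cos]
    rw [heval, ← hsθ, cos_pow_eq b θ]
    rw [← mul_sub, abs_mul]
    have h2b : |(2^b : ℝ)⁻¹| = (2^b : ℝ)⁻¹ := abs_of_pos (by positivity)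
    rw [h2b]
    have hsplit : ∑ j ∈ Finset.range (b+1), (b.choose j : ℝ) * Real.cos (((2*(j:ℤ) - b : ℤ) : ℝ) * θ)
        = (∑ j ∈ F, (b.choose j : ℝ) * Real.cos (((2*(j:ℤ) - b : ℤ) : ℝ) * θ))
          + ∑ j ∈ (Finset.range (b+1)).filter (fun j : ℕ => (d:ℤ) < |2*(j:ℤ) - b|),
              (b.choose j : ℝ) * Real.cos (((2*(j:ℤ) - b : ℤ) : ℝ) * θ) := by
      have h := Finset.sum_filter_add_sum_filter_not (Finset.range (b+1))
        (fun j : ℕ => (d:ℤ) < |2*(j:ℤ) - b|)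
        (fun j => (b.choose j : ℝ) * Real.cos (((2*(j:ℤ) - b : ℤ) : ℝ) * θ))
      rw [hF]
      linarith [h]
    rw [hsplit]
    have habs : (∑ j ∈ F, (b.choose j : ℝ) * Real.cos (((2*(j:ℤ) - b : ℤ) : ℝ) * θ))
        - ((∑ j ∈ F, (b.choose j : ℝ) * Real.cos (((2*(j:ℤ) - b : ℤ) : ℝ) * θ))
          + ∑ j ∈ (Finset.range (b+1)).filter (fun j : ℕ => (d:ℤ) < |2*(j:ℤ) - b|),
              (b.choose j : ℝ) * Real.cos (((2*(j:ℤ) - b : ℤ) : ℝ) * θ))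
        = -(∑ j ∈ (Finset.range (b+1)).filter (fun j : ℕ => (d:ℤ) < |2*(j:ℤ) - b|),
              (b.choose j : ℝ) * Real.cos (((2*(j:ℤ) - b : ℤ) : ℝ) * θ)) := by ring
    rw [habs, abs_neg]
    have hsum : |∑ j ∈ (Finset.range (b+1)).filter (fun j : ℕ => (d:ℤ) < |2*(j:ℤ) - b|),
              (b.choose j : ℝ) * Real.cos (((2*(j:ℤ) - b : ℤ) : ℝ) * θ)|
        ≤ ∑ j ∈ (Finset.range (b+1)).filter (fun j : ℕ => (d:ℤ) < |2*(j:ℤ) - b|), (b.choose j : ℝ) := by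
      refine le_trans (Finset.abs_sum_le_sum_abs _ _) (Finset.sum_le_sum (fun j hj => ?_))
      rw [abs_mul, Nat.abs_cast]
      have : |Real.cos (((2*(j:ℤ) - b : ℤ) : ℝ) * θ)| ≤ 1 := Real.abs_cos_le_one _
      nlinarith [Nat.cast_nonneg (α := ℝ) (b.choose j)]
    have htail := tail_bound b d hb
    have h2bpos : (0:ℝ) < 2^b := by positivity
    calc (2^b : ℝ)⁻¹ * |∑ j ∈ (Finset.range (b+1)).filter (fun j : ℕ => (d:ℤ) < |2*(j:ℤ) - b|),
              (b.choose j : ℝ) * Real.cos (((2*(j:ℤ) - b : ℤ) : ℝ) * θ)|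
        ≤ (2^b : ℝ)⁻¹ * (2^b * (2 * Real.exp (-(d:ℝ)^2/(2*b)))) := by
          apply mul_le_mul_of_nonneg_left (hsum.trans htail) (by positivity)
      _ = 2 * Real.exp (-(d:ℝ)^2/(2*b)) := by field_simp

noncomputable def cc (k : ℕ) : ℝ := (Nat.centralBinom k : ℝ) / 4^k

lemma cc_zero : cc 0 = 1 := by simp [cc, Nat.centralBinom_zero]

lemma cc_pos (k : ℕ) : 0 < cc k := by
  have := Nat.centralBinom_pos k
  unfold cc
  positivity

lemma cc_rec (k : ℕ) : 2*((k:ℝ)+1) * cc (k+1) = (2*k+1) * cc k := by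
  have h := Nat.succ_mul_centralBinom_succ k
  have h' : ((k:ℝ)+1) * (Nat.centralBinom (k+1) : ℝ) = 2*(2*k+1) * (Nat.centralBinom k : ℝ) := by
    exact_mod_cast congrArg (Nat.cast (R := ℝ)) h
  unfold cc
  have h4 : (4:ℝ)^(k+1) = 4 * 4^k := by ring
  rw [h4]
  linear_combination (2/(4*(4:ℝ)^k)) * h'

lemma cc_le_one (k : ℕ) : cc k ≤ 1 := by
  induction k with
  | zero => simp [cc_zero]
  | succ n ih =>
    have hrec := cc_rec n
    have hpos : (0:ℝ) < 2*((n:ℝ)+1) := by positivity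
    have : cc (n+1) = (2*n+1) * cc n / (2*((n:ℝ)+1)) := by field_simp; linarith [hrec]
    rw [this]
    rw [div_le_one hpos]
    nlinarith [cc_pos n, (cc_pos n).le]

noncomputable def SS (n : ℕ) (t : ℝ) : ℝ := ∑ k ∈ Finset.range (n+1), cc k * t^k

noncomputable def DD (n : ℕ) (t : ℝ) : ℝ := ∑ k ∈ Finset.range (n+1), cc k * (k * t^(k-1))

lemma hasDerivAt_SS (n : ℕ) (t : ℝ) : HasDerivAt (SS n) (DD n t) t := by
  unfold SS DD
  apply HasDerivAt.fun_sum
  intro k _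
  exact (hasDerivAt_pow k t).const_mul (cc k)

lemma DD_identity (n : ℕ) (t : ℝ) : 2*(1-t) * DD n t = SS n t - (2*n+1) * cc n * t^n := by
  induction n with
  | zero => simp [DD, SS, cc_zero]
  | succ n ih =>
    have hD : DD (n+1) t = DD n t + cc (n+1) * ((n+1) * t^n) := by
      unfold DD
      rw [Finset.sum_range_succ]
      simp
    have hS : SS (n+1) t = SS n t + cc (n+1) * t^(n+1) := by
      unfold SS
      rw [Finset.sum_range_succ]
    have hrec := cc_rec n
    rw [hD, hS]
    have expand : 2*(1-t) * (DD n t + cc (n+1) * ((n+1) * t^n))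
        = 2*(1-t)*DD n t + (2*((n:ℝ)+1)*cc (n+1)) * t^n - (2*((n:ℝ)+1)*cc (n+1)) * t^(n+1) := by
      ring
    rw [expand, ih]
    push_cast
    linear_combination (t^n) * hrec

lemma remainder_bound (n : ℕ) (κ : ℝ) (hκ : 1 ≤ κ) (t : ℝ) (ht0 : 0 ≤ t) (ht1 : t ≤ 1 - 1/κ) :
    |1/Real.sqrt (1-t) - SS n t| ≤ (2*n+1) * κ * t^(n+1) / 2 := by
  have hκ0 : (0:ℝ) < κ := lt_of_lt_of_le one_pos hκ
  have hκinv : (0:ℝ) < 1/κ := by positivity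
  have hlow : ∀ u : ℝ, u ∈ Set.Icc (0:ℝ) t → 1/κ ≤ 1 - u := fun u hu => by
    have := hu.2; linarith
  have h1t : 1/κ ≤ 1 - t := by linarith
  have h1t0 : (0:ℝ) < 1 - t := lt_of_lt_of_le hκinv h1t
  set h : ℝ → ℝ := fun u => Real.sqrt (1-u) * SS n u with hh
  set h' : ℝ → ℝ := fun u => -((2*(n:ℝ)+1) * cc n * u^n) / (2*Real.sqrt (1-u)) with hh'
  have hsqrt_pos : ∀ u : ℝ, u ∈ Set.Icc (0:ℝ) t → 0 < Real.sqrt (1-u) := fun u hu =>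
    Real.sqrt_pos.mpr (lt_of_lt_of_le hκinv (hlow u hu))
  have hderiv : ∀ u ∈ Set.Icc (0:ℝ) t, HasDerivAt h (h' u) u := by
    intro u hu
    have h1u : (0:ℝ) < 1 - u := lt_of_lt_of_le hκinv (hlow u hu)
    have hg : HasDerivAt (fun u : ℝ => Real.sqrt (1-u)) (-(1/(2*Real.sqrt (1-u)))) u := by
      have hid : HasDerivAt (fun u : ℝ => 1-u) (-1) u := (hasDerivAt_id u).const_sub 1
      have := (Real.hasDerivAt_sqrt h1u.ne').comp u hid
      refine this.congr_deriv ?_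
      simp
    have := hg.fun_mul (hasDerivAt_SS n u)
    refine this.congr_deriv ?_
    have hs : Real.sqrt (1-u) ≠ 0 := (hsqrt_pos u hu).ne'
    have hsq : Real.sqrt (1-u) * Real.sqrt (1-u) = 1 - u := Real.mul_self_sqrt h1u.le
    have hDI := DD_identity n u
    rw [hh']
    show _ = -((2*(n:ℝ)+1) * cc n * u^n) / (2*Real.sqrt (1-u))
    have hinv : (1/(2*Real.sqrt (1-u))) * (2*Real.sqrt (1-u)) = 1 := by field_simp
    rw [eq_div_iff (mul_ne_zero two_ne_zero hs)]
    linear_combination hDI - SS n u * hinv + 2 * DD n u * hsq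
  have hbound : ∀ u ∈ Set.Ico (0:ℝ) t, ‖h' u‖ ≤ (2*(n:ℝ)+1) * Real.sqrt κ * t^n / 2 := by
    intro u hu
    have hu' : u ∈ Set.Icc (0:ℝ) t := ⟨hu.1, hu.2.le⟩
    have h1u : (0:ℝ) < 1 - u := lt_of_lt_of_le hκinv (hlow u hu')
    have hsp := hsqrt_pos u hu'
    rw [hh', Real.norm_eq_abs, abs_div, abs_neg]
    have hnum0 : (0:ℝ) ≤ (2*(n:ℝ)+1) * cc n * u^n := by
      have := (cc_pos n).le
      have : (0:ℝ) ≤ u^n := pow_nonneg hu.1 n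
      positivity
    rw [abs_of_nonneg hnum0, abs_of_pos (by positivity : (0:ℝ) < 2*Real.sqrt (1-u))]
    have hsqrt_ge : 1/Real.sqrt κ ≤ Real.sqrt (1-u) := by
      rw [one_div, ← Real.sqrt_inv]
      exact Real.sqrt_le_sqrt (by rw [inv_eq_one_div]; exact hlow u hu')
    have hrecip : 1/Real.sqrt (1-u) ≤ Real.sqrt κ := by
      rw [div_le_iff₀ hsp]
      have hκs : (0:ℝ) < Real.sqrt κ := Real.sqrt_pos.mpr hκ0
      calc (1:ℝ) = Real.sqrt κ * (1/Real.sqrt κ) := by field_simp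
        _ ≤ Real.sqrt κ * Real.sqrt (1-u) := by
            exact mul_le_mul_of_nonneg_left hsqrt_ge hκs.le
    have hun : u^n ≤ t^n := pow_le_pow_left₀ hu.1 hu.2.le n
    have hccn : cc n ≤ 1 := cc_le_one n
    have hnum_le : (2*(n:ℝ)+1) * cc n * u^n ≤ (2*(n:ℝ)+1) * t^n := by
      have h1 : (0:ℝ) ≤ 2*(n:ℝ)+1 := by positivity
      have h2 : cc n * u^n ≤ t^n := by
        calc cc n * u^n ≤ 1 * u^n := mul_le_mul_of_nonneg_right hccn (pow_nonneg hu.1 n)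
          _ = u^n := one_mul _
          _ ≤ t^n := hun
      calc (2*(n:ℝ)+1) * cc n * u^n = (2*(n:ℝ)+1) * (cc n * u^n) := by ring
        _ ≤ (2*(n:ℝ)+1) * t^n := mul_le_mul_of_nonneg_left h2 h1
    calc (2*(n:ℝ)+1) * cc n * u^n / (2*Real.sqrt (1-u))
        = ((2*(n:ℝ)+1) * cc n * u^n) * (1/Real.sqrt (1-u)) / 2 := by ring
      _ ≤ ((2*(n:ℝ)+1) * t^n) * Real.sqrt κ / 2 := by
          have := mul_le_mul hnum_le hrecip (by positivity) (by positivity)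
          linarith
      _ = (2*(n:ℝ)+1) * Real.sqrt κ * t^n / 2 := by ring
  have hMVT := norm_image_sub_le_of_norm_deriv_le_segment'
    (f := h) (f' := h') (a := 0) (b := t)
    (fun u hu => (hderiv u hu).hasDerivWithinAt) hbound t (Set.right_mem_Icc.mpr ht0)
  have hh0 : h 0 = 1 := by
    rw [hh]
    simp only [sub_zero, Real.sqrt_one, one_mul, SS]
    rw [Finset.sum_eq_single 0]
    · simp [cc_zero]
    · intro k _ hk
      simp [zero_pow hk]
    · intro hk
      simp at hk
  rw [hh0, Real.norm_eq_abs, sub_zero] at hMVT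
  -- now |h t - 1| ≤ C t
  have hst : Real.sqrt (1-t) ≠ 0 := (Real.sqrt_pos.mpr h1t0).ne'
  have hkey : 1/Real.sqrt (1-t) - SS n t = (1 - h t) / Real.sqrt (1-t) := by
    rw [hh]
    field_simp
  rw [hkey, abs_div, abs_of_pos (Real.sqrt_pos.mpr h1t0)]
  have hrecip : 1/Real.sqrt (1-t) ≤ Real.sqrt κ := by
    rw [div_le_iff₀ (Real.sqrt_pos.mpr h1t0)]
    have hκs : (0:ℝ) < Real.sqrt κ := Real.sqrt_pos.mpr hκ0
    have hsqrt_ge : 1/Real.sqrt κ ≤ Real.sqrt (1-t) := by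
      rw [one_div, ← Real.sqrt_inv]
      exact Real.sqrt_le_sqrt (by rw [inv_eq_one_div]; exact h1t)
    calc (1:ℝ) = Real.sqrt κ * (1/Real.sqrt κ) := by field_simp
      _ ≤ Real.sqrt κ * Real.sqrt (1-t) := mul_le_mul_of_nonneg_left hsqrt_ge hκs.le
  have habs : |1 - h t| ≤ (2*(n:ℝ)+1) * Real.sqrt κ * t^n / 2 * t := by
    rw [abs_sub_comm]; exact hMVT
  calc |1 - h t| / Real.sqrt (1-t)
      = |1 - h t| * (1/Real.sqrt (1-t)) := by ring
    _ ≤ ((2*(n:ℝ)+1) * Real.sqrt κ * t^n / 2 * t) * Real.sqrt κ := by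
        apply mul_le_mul habs hrecip (by positivity) (by positivity)
    _ = (2*(n:ℝ)+1) * (Real.sqrt κ * Real.sqrt κ) * t^(n+1) / 2 := by ring
    _ = (2*(n:ℝ)+1) * κ * t^(n+1) / 2 := by
        rw [Real.mul_self_sqrt hκ0.le]

set_option maxHeartbeats 2000000 in
/-- There exists a constant `C > 0` such that for every real `κ ≥ 2` and every real `δ` with
`0 < δ < 1/2`, there exists a real polynomial `q` with `deg q ≤ C · √κ · ln(κ/δ)` such that
`|q(x) − x^{−1/2}| ≤ δ/√κ` for all real `x` with `1 ≤ x ≤ κ`. -/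
theorem stmt_1 :
    ∃ C : ℝ, 0 < C ∧
      ∀ κ : ℝ, 2 ≤ κ → ∀ δ : ℝ, 0 < δ → δ < 1 / 2 →
        ∃ q : Polynomial ℝ,
          (q.natDegree : ℝ) ≤ C * Real.sqrt κ * Real.log (κ / δ) ∧
          ∀ x : ℝ, 1 ≤ x → x ≤ κ →
            |q.eval x - 1 / Real.sqrt x| ≤ δ / Real.sqrt κ := by
  refine ⟨15, by norm_num, ?_⟩
  intro κ hκ δ hδ0 hδh
  -- basic facts
  have hκ0 : (0:ℝ) < κ := by linarith
  have hκ1 : (1:ℝ) ≤ κ := by linarith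
  have hratio4 : (4:ℝ) ≤ κ/δ := by
    rw [le_div_iff₀ hδ0]; nlinarith
  have hratio0 : (0:ℝ) < κ/δ := by positivity
  set L : ℝ := Real.log (κ/δ) with hL
  have hL1 : (1:ℝ) ≤ L := by
    rw [hL, Real.le_log_iff_exp_le hratio0]
    calc Real.exp 1 ≤ 2.7182818286 := Real.exp_one_lt_d9.le
      _ ≤ 4 := by norm_num
      _ ≤ κ/δ := hratio4
  have hexpL : Real.exp L = κ/δ := Real.exp_log hratio0
  have hLle : L ≤ κ/δ := by
    rw [hL]
    calc Real.log (κ/δ) ≤ κ/δ - 1 := Real.log_le_sub_one_of_pos hratio0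
      _ ≤ κ/δ := by linarith
  have hLδ : L * δ ≤ κ := by
    rw [← le_div_iff₀ hδ0] at *; exact hLle
  have hκL : (2:ℝ) ≤ κ * L := by nlinarith
  have hsκ : (0:ℝ) < Real.sqrt κ := Real.sqrt_pos.mpr hκ0
  set n : ℕ := ⌈8*κ*L⌉₊ with hn
  set d : ℕ := ⌈14*Real.sqrt κ*L⌉₊ with hd
  have hn_low : 8*κ*L ≤ (n:ℝ) := Nat.le_ceil _
  have hn_up : (n:ℝ) ≤ 9*κ*L := by
    have := Nat.ceil_lt_add_one (by positivity : (0:ℝ) ≤ 8*κ*L)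
    rw [← hn] at this
    nlinarith
  have hn_pos : 0 < n := by
    have : (0:ℝ) < (n:ℝ) := by nlinarith
    exact_mod_cast this
  have hd_low : 14*Real.sqrt κ*L ≤ (d:ℝ) := Nat.le_ceil _
  have hd_up : (d:ℝ) ≤ 15*Real.sqrt κ*L := by
    have h1 := Nat.ceil_lt_add_one (by positivity : (0:ℝ) ≤ 14*Real.sqrt κ*L)
    rw [← hd] at h1
    have hsL : (1:ℝ) ≤ Real.sqrt κ * L := by
      have : (1:ℝ) ≤ Real.sqrt κ := by
        rw [show (1:ℝ) = Real.sqrt 1 from (Real.sqrt_one).symm]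
        exact Real.sqrt_le_sqrt hκ1
      nlinarith
    nlinarith
  -- error bound 2 : compression errors
  have hE2 : ((n:ℝ)+1) * (2 * Real.exp (-(d:ℝ)^2/(2*(n:ℝ)))) ≤ δ/2 := by
    have hd2 : 196*κ*L^2 ≤ (d:ℝ)^2 := by
      have h0 : (0:ℝ) ≤ 14*Real.sqrt κ*L := by positivity
      have := mul_self_le_mul_self h0 hd_low
      have hsq : Real.sqrt κ * Real.sqrt κ = κ := Real.mul_self_sqrt hκ0.le
      nlinarith
    have h2n_pos : (0:ℝ) < 2*(n:ℝ) := by positivity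
    have harg : 10*L ≤ (d:ℝ)^2/(2*(n:ℝ)) := by
      rw [le_div_iff₀ h2n_pos]
      nlinarith
    have hexp : Real.exp (-(d:ℝ)^2/(2*(n:ℝ))) ≤ δ^10/κ^10 := by
      have : Real.exp (-(d:ℝ)^2/(2*(n:ℝ))) ≤ Real.exp (-(10*L)) := by
        apply Real.exp_le_exp.mpr
        rw [neg_div]
        linarith
      refine this.trans (le_of_eq ?_)
      rw [show -(10*L) = -((10:ℕ)*L) by norm_num, Real.exp_neg, Real.exp_nat_mul, hexpL]
      rw [div_pow, inv_div]
    have hn2 : ((n:ℝ)+1)*2 ≤ 20*κ*L := by nlinarith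
    have hδ8 : δ^8 ≤ (1/2)^8 := by
      apply pow_le_pow_left₀ hδ0.le
      linarith
    have hκ9 : κ ≤ κ^9 := le_self_pow₀ hκ1 (by norm_num)
    have hkey : 40*L*δ^9 ≤ κ^9 := by
      have hδ8' : (0:ℝ) ≤ δ^8 := by positivity
      calc 40*L*δ^9 = 40*(L*δ)*δ^8 := by ring
        _ ≤ 40*κ*δ^8 := by
            have := mul_le_mul_of_nonneg_right hLδ hδ8'
            linarith
        _ ≤ 40*κ*(1/2)^8 := by
            have := mul_le_mul_of_nonneg_left hδ8 (by positivity : (0:ℝ) ≤ 40*κ)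
            linarith [this]
        _ ≤ κ := by norm_num; linarith
        _ ≤ κ^9 := hκ9
    calc ((n:ℝ)+1) * (2 * Real.exp (-(d:ℝ)^2/(2*(n:ℝ))))
        = (((n:ℝ)+1)*2) * Real.exp (-(d:ℝ)^2/(2*(n:ℝ))) := by ring
      _ ≤ (20*κ*L) * (δ^10/κ^10) := by
          apply mul_le_mul hn2 hexp (Real.exp_nonneg _) (by positivity)
      _ = (40*L*δ^9) * (δ/(2*κ^9)) := by
          field_simp
          ring
      _ ≤ κ^9 * (δ/(2*κ^9)) := by
          apply mul_le_mul_of_nonneg_right hkey (by positivity)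
      _ = δ/2 := by field_simp
  -- error bound 1 : series truncation, for each admissible t
  have hE1 : ∀ t : ℝ, 0 ≤ t → t ≤ 1 - 1/κ → (2*(n:ℝ)+1) * κ * t^(n+1) / 2 ≤ δ/2 := by
    intro t ht0 ht1
    have hexpk : t ≤ Real.exp (-(1/κ)) := by
      have := Real.add_one_le_exp (-(1/κ))
      linarith
    have htpow : t^(n+1) ≤ Real.exp (-(((n:ℝ)+1)/κ)) := by
      calc t^(n+1) ≤ (Real.exp (-(1/κ)))^(n+1) := pow_le_pow_left₀ ht0 hexpk (n+1)
        _ = Real.exp (-(((n:ℝ)+1)/κ)) := by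
            rw [← Real.exp_nat_mul]
            congr 1
            push_cast
            field_simp
    have hexp8 : Real.exp (-(((n:ℝ)+1)/κ)) ≤ δ^8/κ^8 := by
      have h1 : 8*L ≤ ((n:ℝ)+1)/κ := by
        rw [le_div_iff₀ hκ0]
        nlinarith
      have : Real.exp (-(((n:ℝ)+1)/κ)) ≤ Real.exp (-(8*L)) := by
        apply Real.exp_le_exp.mpr
        linarith
      refine this.trans (le_of_eq ?_)
      rw [show -(8*L) = -((8:ℕ)*L) by norm_num, Real.exp_neg, Real.exp_nat_mul, hexpL]
      rw [div_pow, inv_div]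
    have h2n1 : 2*(n:ℝ)+1 ≤ 19*κ*L := by nlinarith
    have hδ6 : δ^6 ≤ (1/2)^6 := by
      apply pow_le_pow_left₀ hδ0.le
      linarith
    have hκ6 : κ ≤ κ^6 := le_self_pow₀ hκ1 (by norm_num)
    have hkey : 19*L*δ^7 ≤ κ^6 := by
      have hδ6' : (0:ℝ) ≤ δ^6 := by positivity
      calc 19*L*δ^7 = 19*(L*δ)*δ^6 := by ring
        _ ≤ 19*κ*δ^6 := by
            have := mul_le_mul_of_nonneg_right hLδ hδ6'
            linarith
        _ ≤ 19*κ*(1/2)^6 := by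
            have := mul_le_mul_of_nonneg_left hδ6 (by positivity : (0:ℝ) ≤ 19*κ)
            linarith [this]
        _ ≤ κ := by norm_num; linarith
        _ ≤ κ^6 := hκ6
    have htn : (0:ℝ) ≤ t^(n+1) := pow_nonneg ht0 _
    calc (2*(n:ℝ)+1) * κ * t^(n+1) / 2
        ≤ (19*κ*L) * κ * (δ^8/κ^8) / 2 := by
          have hh : (2*(n:ℝ)+1) * t^(n+1) ≤ (19*κ*L) * (δ^8/κ^8) := by
            apply mul_le_mul h2n1 (htpow.trans hexp8) htn (by positivity)
          nlinarith
      _ = (19*L*δ^7) * (δ/(2*κ^6)) := by field_simp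
      _ ≤ κ^6 * (δ/(2*κ^6)) := mul_le_mul_of_nonneg_right hkey (by positivity)
      _ = δ/2 := by field_simp
  -- the polynomial
  classical
  set P : ℕ → Polynomial ℝ := fun k =>
    if hk : d < k then Classical.choose (mono_approx k d (by omega)) else X^k
    with hP
  have hPdeg : ∀ k, (P k).natDegree ≤ d := by
    intro k
    rw [hP]
    by_cases hk : d < k
    · simp only [dif_pos hk]
      exact (Classical.choose_spec (mono_approx k d (by omega))).1
    · simp only [dif_neg hk]
      simpa [Polynomial.natDegree_X_pow] using (by omega : k ≤ d)
  have hPerr : ∀ k, d < k → ∀ s : ℝ, |s| ≤ 1 →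
      |(P k).eval s - s^k| ≤ 2 * Real.exp (-(d:ℝ)^2 / (2*k)) := by
    intro k hk s hs
    have : P k = Classical.choose (mono_approx k d (by omega)) := by rw [hP]; simp only [dif_pos hk]
    rw [this]
    exact (Classical.choose_spec (mono_approx k d (by omega))).2 s hs
  have hPexact : ∀ k, ¬ (d < k) → P k = X^k := fun k hk => by rw [hP]; simp only [dif_neg hk]
  set lin : Polynomial ℝ := Polynomial.C (1:ℝ) - Polynomial.C κ⁻¹ * Polynomial.X with hlin
  have hlindeg : lin.natDegree ≤ 1 := by
    rw [hlin]
    refine le_trans (Polynomial.natDegree_sub_le _ _) ?_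
    simp only [max_le_iff, Polynomial.natDegree_C]
    refine ⟨by omega, ?_⟩
    refine le_trans Polynomial.natDegree_mul_le ?_
    simp [Polynomial.natDegree_C, Polynomial.natDegree_X]
  refine ⟨Polynomial.C (Real.sqrt κ)⁻¹ *
    ∑ k ∈ Finset.range (n+1), Polynomial.C (cc k) * ((P k).comp lin), ?_, ?_⟩
  · -- degree bound
    have hdeg : (Polynomial.C (Real.sqrt κ)⁻¹ *
        ∑ k ∈ Finset.range (n+1), Polynomial.C (cc k) * ((P k).comp lin)).natDegree ≤ d := by
      refine le_trans Polynomial.natDegree_mul_le ?_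
      rw [Polynomial.natDegree_C, zero_add]
      refine Polynomial.natDegree_sum_le_of_forall_le _ _ (fun k _ => ?_)
      refine le_trans Polynomial.natDegree_mul_le ?_
      rw [Polynomial.natDegree_C, zero_add]
      refine le_trans Polynomial.natDegree_comp_le ?_
      calc (P k).natDegree * lin.natDegree ≤ d * 1 :=
            Nat.mul_le_mul (hPdeg k) hlindeg
        _ = d := by omega
    calc ((Polynomial.C (Real.sqrt κ)⁻¹ *
        ∑ k ∈ Finset.range (n+1), Polynomial.C (cc k) * ((P k).comp lin)).natDegree : ℝ)
        ≤ (d:ℝ) := by exact_mod_cast hdeg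
      _ ≤ 15*Real.sqrt κ*L := hd_up
  · -- approximation bound
    intro x hx1 hxκ
    have hxpos : (0:ℝ) < x := by linarith
    set t : ℝ := 1 - κ⁻¹ * x with hT
    clear_value t
    have hκinv : (0:ℝ) < κ⁻¹ := by positivity
    have ht0 : 0 ≤ t := by
      rw [hT]
      have : κ⁻¹ * x ≤ κ⁻¹ * κ := mul_le_mul_of_nonneg_left hxκ hκinv.le
      rw [inv_mul_cancel₀ hκ0.ne'] at this
      linarith
    have ht1 : t ≤ 1 - 1/κ := by
      rw [hT]
      have : κ⁻¹ * 1 ≤ κ⁻¹ * x := mul_le_mul_of_nonneg_left hx1 hκinv.le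
      rw [mul_one] at this
      rw [one_div]
      linarith
    have htabs : |t| ≤ 1 := by
      have h1κ : (0:ℝ) < 1/κ := by positivity
      rw [abs_le]
      exact ⟨by linarith, by linarith⟩
    have hlineval : lin.eval x = t := by
      rw [hlin, hT]; simp
    have hqeval : (Polynomial.C (Real.sqrt κ)⁻¹ *
        ∑ k ∈ Finset.range (n+1), Polynomial.C (cc k) * ((P k).comp lin)).eval x
        = (Real.sqrt κ)⁻¹ * ∑ k ∈ Finset.range (n+1), cc k * (P k).eval t := by
      rw [Polynomial.eval_mul, Polynomial.eval_C, Polynomial.eval_finset_sum]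
      congr 1
      refine Finset.sum_congr rfl (fun k _ => ?_)
      rw [Polynomial.eval_mul, Polynomial.eval_C, Polynomial.eval_comp, hlineval]
    have h1t : 1 - t = x/κ := by rw [hT]; field_simp; ring
    have hsx : (0:ℝ) < Real.sqrt x := Real.sqrt_pos.mpr hxpos
    have hsqrtx : 1/Real.sqrt x = (Real.sqrt κ)⁻¹ * (1/Real.sqrt (1-t)) := by
      rw [h1t, Real.sqrt_div hxpos.le]
      field_simp
    have hA : |∑ k ∈ Finset.range (n+1), cc k * (P k).eval t - SS n t|
        ≤ ((n:ℝ)+1) * (2 * Real.exp (-(d:ℝ)^2/(2*(n:ℝ)))) := by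
      unfold SS
      rw [← Finset.sum_sub_distrib]
      have hterm : ∀ k ∈ Finset.range (n+1),
          |cc k * (P k).eval t - cc k * t^k| ≤ 2 * Real.exp (-(d:ℝ)^2/(2*(n:ℝ))) := by
        intro k hkmem
        have hkn : k ≤ n := Nat.lt_succ_iff.mp (Finset.mem_range.mp hkmem)
        by_cases hk : d < k
        · have herr := hPerr k hk t htabs
          have hccpos := cc_pos k
          have hccle := cc_le_one k
          have hmono : Real.exp (-(d:ℝ)^2/(2*(k:ℝ))) ≤ Real.exp (-(d:ℝ)^2/(2*(n:ℝ))) := by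
            apply Real.exp_le_exp.mpr
            rw [neg_div, neg_div, neg_le_neg_iff]
            have hk0 : (0:ℝ) < 2*(k:ℝ) := by
              have : 0 < k := by omega
              positivity
            apply div_le_div_of_nonneg_left (by positivity) hk0
            have : (k:ℝ) ≤ (n:ℝ) := by exact_mod_cast hkn
            linarith
          calc |cc k * (P k).eval t - cc k * t^k| = cc k * |(P k).eval t - t^k| := by
                rw [← mul_sub, abs_mul, abs_of_pos hccpos]
            _ ≤ 1 * (2 * Real.exp (-(d:ℝ)^2/(2*(k:ℝ)))) := by
                apply mul_le_mul hccle herr (abs_nonneg _) zero_le_one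
            _ = 2 * Real.exp (-(d:ℝ)^2/(2*(k:ℝ))) := one_mul _
            _ ≤ 2 * Real.exp (-(d:ℝ)^2/(2*(n:ℝ))) := by linarith
        · rw [hPexact k hk]
          simp only [Polynomial.eval_pow, Polynomial.eval_X]
          rw [sub_self, abs_zero]
          positivity
      calc |∑ k ∈ Finset.range (n+1), (cc k * (P k).eval t - cc k * t^k)|
          ≤ ∑ k ∈ Finset.range (n+1), |cc k * (P k).eval t - cc k * t^k| :=
            Finset.abs_sum_le_sum_abs _ _
        _ ≤ ∑ k ∈ Finset.range (n+1), (2 * Real.exp (-(d:ℝ)^2/(2*(n:ℝ)))) :=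
            Finset.sum_le_sum hterm
        _ = ((n:ℝ)+1) * (2 * Real.exp (-(d:ℝ)^2/(2*(n:ℝ)))) := by
            rw [Finset.sum_const, Finset.card_range, nsmul_eq_mul]
            push_cast
            ring
    have hB := remainder_bound n κ hκ1 t ht0 ht1
    have hE1' := hE1 t ht0 ht1
    have htotal : |∑ k ∈ Finset.range (n+1), cc k * (P k).eval t - 1/Real.sqrt (1-t)| ≤ δ := by
      calc |∑ k ∈ Finset.range (n+1), cc k * (P k).eval t - 1/Real.sqrt (1-t)|
          ≤ |∑ k ∈ Finset.range (n+1), cc k * (P k).eval t - SS n t|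
            + |SS n t - 1/Real.sqrt (1-t)| := abs_sub_le _ _ _
        _ ≤ ((n:ℝ)+1) * (2 * Real.exp (-(d:ℝ)^2/(2*(n:ℝ)))) + (2*(n:ℝ)+1) * κ * t^(n+1) / 2 := by
            have := abs_sub_comm (SS n t) (1/Real.sqrt (1-t))
            have hB' : |SS n t - 1/Real.sqrt (1-t)| ≤ (2*(n:ℝ)+1) * κ * t^(n+1) / 2 := by
              rw [abs_sub_comm]
              exact_mod_cast hB
            exact add_le_add hA hB'
        _ ≤ δ/2 + δ/2 := add_le_add hE2 hE1'
        _ = δ := by ring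
    rw [hqeval, hsqrtx, ← mul_sub, abs_mul, abs_of_pos (by positivity : (0:ℝ) < (Real.sqrt κ)⁻¹)]
    calc (Real.sqrt κ)⁻¹ * |∑ k ∈ Finset.range (n+1), cc k * (P k).eval t - 1/Real.sqrt (1-t)|
        ≤ (Real.sqrt κ)⁻¹ * δ := mul_le_mul_of_nonneg_left htotal (by positivity)
      _ = δ / Real.sqrt κ := by rw [div_eq_inv_mul, mul_comm]
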